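/- arXiv:math/0106044 — 6 statements merged into one kernel-verified Lean document; each statement's English description precedes it below -/
import Mathlib

section
/- Let D be a space of functions on an interval I, J ⊆ I, and S : D → F(J) a positive linear operator with constants in D and with ψ_x(t) = t - x and ψ_x² in D for x ∈ J. Then |S(ψ_x)(x)| ≤ (1 + S(1)(x)) · sqrt(S(ψ_x²)(x)). -/
/-! Positivity of `S` applied to `δ · 1 + δ⁻¹ ψ_x² ∓ ψ_x ≥ 0` gives
`|S(ψ_x)(x)| ≤ δ S(1)(x) + δ⁻¹ S(ψ_x²)(x)` for every `δ > 0`; the choice `δ = √(S(ψ_x²)(x))` yields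
the claim, and when `S(ψ_x²)(x) = 0` letting `δ → 0` shows `S(ψ_x)(x) = 0`. -/

lemma abs_le_add_inv_mul_sq {δ : ℝ} (hδ : 0 < δ) (u : ℝ) : |u| ≤ δ + δ⁻¹ * u ^ 2 := by
  have h : δ * |u| ≤ δ * (δ + δ⁻¹ * u ^ 2) := by
    rw [mul_add, ← mul_assoc, mul_inv_cancel₀ hδ.ne', one_mul]
    nlinarith [sq_nonneg (δ - |u|), sq_abs u]
  exact le_of_mul_le_mul_left h hδ

lemma le_one_add_mul_sqrt_of_forall_pos {a b c : ℝ} (ha : 0 ≤ a)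
    (h : ∀ δ : ℝ, 0 < δ → c ≤ δ * a + δ⁻¹ * b) : c ≤ (1 + a) * √b := by
  rcases (le_or_gt b 0) with hb | hb
  · rw [Real.sqrt_eq_zero'.mpr hb, mul_zero]
    refine le_of_forall_pos_le_add fun ε hε => ?_
    have hδ : 0 < ε / (a + 1) := by positivity
    calc c ≤ ε / (a + 1) * a + (ε / (a + 1))⁻¹ * b := h _ hδ
      _ ≤ ε / (a + 1) * (a + 1) := by nlinarith [inv_pos.mpr hδ]
      _ = 0 + ε := by field_simp; ring
  · have hs : 0 < √b := Real.sqrt_pos.mpr hb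
    calc c ≤ √b * a + (√b)⁻¹ * b := h _ hs
      _ = (1 + a) * √b := by rw [inv_mul_eq_div, Real.div_sqrt]; ring

section PositiveOn

variable {α : Type*} {s : Set α} (L : (α → ℝ) →ₗ[ℝ] ℝ)
  (hL : ∀ f : α → ℝ, (∀ t ∈ s, 0 ≤ f t) → 0 ≤ L f)
include hL

lemma LinearMap.apply_le_apply_of_le_on {f g : α → ℝ} (hfg : ∀ t ∈ s, f t ≤ g t) : L f ≤ L g := by
  have := hL (g - f) fun t ht => sub_nonneg.mpr (hfg t ht)
  rwa [map_sub, sub_nonneg] at this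

lemma LinearMap.abs_apply_le_mul_one_add_inv_mul_sq (g : α → ℝ) {δ : ℝ} (hδ : 0 < δ) :
    |L g| ≤ δ * L 1 + δ⁻¹ * L (g ^ 2) := by
  have hmajor : ∀ t ∈ s, |g t| ≤ (δ • 1 + δ⁻¹ • g ^ 2 : α → ℝ) t := fun t _ => by
    simpa using abs_le_add_inv_mul_sq hδ (g t)
  have hupper := L.apply_le_apply_of_le_on hL fun t ht => (le_abs_self _).trans (hmajor t ht)
  have hlower := L.apply_le_apply_of_le_on hL (f := -g) fun t ht => (neg_le_abs (g t)).trans (hmajor t ht)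
  simp only [map_add, map_smul, map_neg, smul_eq_mul] at hupper hlower
  exact abs_le.mpr ⟨by linarith, hupper⟩

lemma LinearMap.abs_apply_le_one_add_mul_sqrt (g : α → ℝ) :
    |L g| ≤ (1 + L 1) * √(L (g ^ 2)) :=
  le_one_add_mul_sqrt_of_forall_pos (hL 1 fun _ _ => zero_le_one) fun _ hδ =>
    L.abs_apply_le_mul_one_add_inv_mul_sq hL g hδ

end PositiveOn

theorem stmt_4_general (I J : Set ℝ)
    (S : (ℝ → ℝ) → (ℝ → ℝ))
    (hadd : ∀ f g : ℝ → ℝ, S (f + g) = S f + S g)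
    (hsmul : ∀ (c : ℝ) (f : ℝ → ℝ), S (c • f) = c • S f)
    (hpos : ∀ f : ℝ → ℝ, (∀ t ∈ I, 0 ≤ f t) → ∀ y ∈ J, 0 ≤ S f y)
    (x : ℝ) (hx : x ∈ J) :
    |S (fun t => t - x) x| ≤ (1 + S (fun _ => 1) x) * Real.sqrt (S (fun t => (t - x) ^ 2) x) := by
  let Sx : (ℝ → ℝ) →ₗ[ℝ] ℝ :=
    { toFun := fun f => S f x
      map_add' := fun f g => by simp only [hadd, Pi.add_apply]
      map_smul' := fun c f => by simp only [hsmul, Pi.smul_apply, smul_eq_mul, RingHom.id_apply] }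
  exact Sx.abs_apply_le_one_add_mul_sqrt (s := I) (fun f hf => hpos f hf x hx) (fun t => t - x)

theorem stmt_4 (I J : Set ℝ) (hJI : J ⊆ I)
    (S : (ℝ → ℝ) → (ℝ → ℝ))
    (hadd : ∀ f g : ℝ → ℝ, S (f + g) = S f + S g)
    (hsmul : ∀ (c : ℝ) (f : ℝ → ℝ), S (c • f) = c • S f)
    (hpos : ∀ f : ℝ → ℝ, (∀ t ∈ I, 0 ≤ f t) → ∀ y ∈ J, 0 ≤ S f y)
    (x : ℝ) (hx : x ∈ J) :
    |S (fun t => t - x) x| ≤ (1 + S (fun _ => 1) x) * Real.sqrt (S (fun t => (t - x) ^ 2) x) :=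
  stmt_4_general I J S hadd hsmul hpos x hx
end

section
/- Suppose for each p ≥ 1 the positive linear operator L_p satisfies L_p(ψ_x²)(x) ≤ M₂(x)/p for a function M₂ : J → [0,∞), and L₀(ψ_x²)(x) = 0. Then L_{n,λ_n}(ψ_x²)(x) ≤ λ_n(x)·M₂(x)/n for all n ≥ 1 and x ∈ J. -/
/-! Since `(p/n)·t + (1 - p/n)·x - x = (p/n)(t - x)`, homogeneity of `L p` turns the `p`-th term
into `(p/n)² · L_p(ψ_x²)(x) ≤ p·M₂(x)/n²`. Summing against the binomial weights leaves the mean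
`∑ p·C(n,p) λ^p (1-λ)^(n-p) = nλ` of the binomial distribution, whence the bound `λ·M₂(x)/n`. -/

open Finset

lemma sum_mul_choose_mul_pow_mul_one_sub_pow (n : ℕ) (l : ℝ) :
    ∑ p ∈ range (n + 1), (n.choose p : ℝ) * l ^ p * (1 - l) ^ (n - p) * p = n * l := by
  have h := congrArg (Polynomial.eval l) (bernsteinPolynomial.sum_smul (R := ℝ) n)
  simpa [Polynomial.eval_finsetSum, bernsteinPolynomial, mul_comm] using h

lemma mul_sq_div_le_of_le_div {p n : ℕ} {v B : ℝ} (h : 1 ≤ p → v ≤ B / p) :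
    ((p : ℝ) / n) ^ 2 * v ≤ p * B / n ^ 2 := by
  rcases Nat.eq_zero_or_pos p with rfl | hp
  · simp
  · calc ((p : ℝ) / n) ^ 2 * v ≤ ((p : ℝ) / n) ^ 2 * (B / p) := by gcongr; exact h hp
      _ = p * B / n ^ 2 := by field_simp

theorem stmt_10_general (J : Set ℝ) (L : ℕ → (ℝ → ℝ) → (ℝ → ℝ))
    (hsmul : ∀ (p : ℕ) (c : ℝ) (f : ℝ → ℝ), L p (fun t => c * f t) = fun y => c * L p f y)
    (M2 : ℝ → ℝ)
    (hbound : ∀ p : ℕ, 1 ≤ p → ∀ x ∈ J, L p (fun t => (t - x) ^ 2) x ≤ M2 x / p)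
    (lam : ℝ → ℝ) (hlam : ∀ x ∈ J, lam x ∈ Set.Icc (0:ℝ) 1)
    (n : ℕ) (x : ℝ) (hx : x ∈ J) :
    ∑ p ∈ Finset.range (n + 1),
        (n.choose p : ℝ) * lam x ^ p * (1 - lam x) ^ (n - p) *
          L p (fun t => (((p : ℝ) / n) * t + (1 - (p : ℝ) / n) * x - x) ^ 2) x
      ≤ lam x * M2 x / n := by
  obtain ⟨hl0, hl1⟩ := hlam x hx
  have hshift (p : ℕ) : L p (fun t => (((p : ℝ) / n) * t + (1 - (p : ℝ) / n) * x - x) ^ 2) x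
      = ((p : ℝ) / n) ^ 2 * L p (fun t => (t - x) ^ 2) x := by
    have hsq : (fun t => (((p : ℝ) / n) * t + (1 - (p : ℝ) / n) * x - x) ^ 2)
        = fun t => ((p : ℝ) / n) ^ 2 * (t - x) ^ 2 := by
      funext t; ring
    rw [hsq, hsmul]
  calc _ ≤ ∑ p ∈ range (n + 1),
          (n.choose p : ℝ) * lam x ^ p * (1 - lam x) ^ (n - p) * (p * M2 x / n ^ 2) := by
        have hsub : 0 ≤ 1 - lam x := by linarith
        gcongr with p
        rw [hshift]
        exact mul_sq_div_le_of_le_div fun hp => hbound p hp x hx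
    _ = n * lam x * (M2 x / n ^ 2) := by
        rw [← sum_mul_choose_mul_pow_mul_one_sub_pow n (lam x), sum_mul]
        exact sum_congr rfl fun p _ => by ring
    _ = lam x * M2 x / n := by
        rcases Nat.eq_zero_or_pos n with rfl | hn
        · simp
        · field_simp

theorem stmt_10 (J : Set ℝ) (L : ℕ → (ℝ → ℝ) → (ℝ → ℝ))
    (hL0 : ∀ f : ℝ → ℝ, L 0 f = f)
    (hsmul : ∀ (p : ℕ) (c : ℝ) (f : ℝ → ℝ), L p (fun t => c * f t) = fun y => c * L p f y)
    (M2 : ℝ → ℝ) (hM2 : ∀ x ∈ J, 0 ≤ M2 x)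
    (hbound : ∀ p : ℕ, 1 ≤ p → ∀ x ∈ J, L p (fun t => (t - x) ^ 2) x ≤ M2 x / p)
    (lam : ℝ → ℝ) (hlam : ∀ x ∈ J, lam x ∈ Set.Icc (0:ℝ) 1)
    (n : ℕ) (hn : 1 ≤ n) (x : ℝ) (hx : x ∈ J) :
    ∑ p ∈ Finset.range (n + 1),
        (n.choose p : ℝ) * lam x ^ p * (1 - lam x) ^ (n - p) *
          L p (fun t => (((p : ℝ) / n) * t + (1 - (p : ℝ) / n) * x - x) ^ 2) x
      ≤ lam x * M2 x / n :=
  stmt_10_general J L hsmul M2 hbound lam hlam n x hx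
end

section
/- Suppose for each p ≥ 1, |L_p(ψ_x)(x)| ≤ M₁(x)/p for a function M₁ : J → [0,∞), and L₀(ψ_x)(x) = 0. Then |L_{n,λ_n}(ψ_x)(x)| ≤ M₁(x)·(1 - (1-λ_n(x))^n)/n for all n ≥ 1 and x ∈ J. -/
/-! Every test function `t ↦ (p/n) t + (1 - p/n) x - x` equals `(p/n) (t - x)`, so by homogeneity
the `p`-th term is `(p/n) L_p(ψ_x)(x)`, of modulus at most `M₁(x)/n`; the `p = 0` term vanishes
because of the factor `p/n`. What remains is `M₁(x)/n` times the binomial weights of `p ≥ 1`,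
whose sum is `1 - (1 - λ_n(x))^n`. -/

open Finset

theorem sum_range_choose_succ_mul_pow_mul_one_sub_pow {R : Type*} [CommRing R] (s : R) (n : ℕ) :
    ∑ p ∈ range n, (n.choose (p + 1) : R) * s ^ (p + 1) * (1 - s) ^ (n - (p + 1)) =
      1 - (1 - s) ^ n := by
  have hbinom := (add_pow s (1 - s) n).symm
  rw [add_sub_cancel, one_pow, sum_range_succ'] at hbinom
  simp only [pow_zero, one_mul, Nat.sub_zero, Nat.choose_zero_right, Nat.cast_one, mul_one]
    at hbinom
  refine eq_sub_of_add_eq (Eq.trans ?_ hbinom)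
  exact congrArg (· + _) (sum_congr rfl fun p _ => by ring)

theorem apply_affine_sub_eq_mul {L : (ℝ → ℝ) → ℝ → ℝ}
    (hsmul : ∀ (c : ℝ) (f : ℝ → ℝ), L (fun t => c * f t) = fun y => c * L f y) (a x : ℝ) :
    L (fun t => a * t + (1 - a) * x - x) x = a * L (fun t => t - x) x := by
  have hψ : (fun t => a * t + (1 - a) * x - x) = fun t => a * (t - x) := by
    funext t; ring
  rw [hψ, hsmul]

theorem abs_sum_mul_le_sum_mul {ι : Type*} (s : Finset ι) {w a : ι → ℝ} {B : ℝ}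
    (hw : ∀ i ∈ s, 0 ≤ w i) (ha : ∀ i ∈ s, |a i| ≤ B) :
    |∑ i ∈ s, w i * a i| ≤ (∑ i ∈ s, w i) * B := by
  rw [sum_mul]
  refine (abs_sum_le_sum_abs _ _).trans (sum_le_sum fun i hi => ?_)
  rw [abs_mul, abs_of_nonneg (hw i hi)]
  exact mul_le_mul_of_nonneg_left (ha i hi) (hw i hi)

theorem stmt_11_general (J : Set ℝ) (L : ℕ → (ℝ → ℝ) → (ℝ → ℝ))
    (hsmul : ∀ (p : ℕ) (c : ℝ) (f : ℝ → ℝ), L p (fun t => c * f t) = fun y => c * L p f y)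
    (M1 : ℝ → ℝ)
    (hbound : ∀ p : ℕ, 1 ≤ p → ∀ x ∈ J, |L p (fun t => t - x) x| ≤ M1 x / p)
    (lam : ℝ → ℝ) (hlam : ∀ x ∈ J, lam x ∈ Set.Icc (0:ℝ) 1)
    (n : ℕ) (x : ℝ) (hx : x ∈ J) :
    |∑ p ∈ Finset.range (n + 1),
        (n.choose p : ℝ) * lam x ^ p * (1 - lam x) ^ (n - p) *
          L p (fun t => ((p : ℝ) / n) * t + (1 - (p : ℝ) / n) * x - x) x|
      ≤ M1 x * (1 - (1 - lam x) ^ n) / n := by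
  obtain ⟨hs0, hs1⟩ := hlam x hx
  simp_rw [apply_affine_sub_eq_mul (hsmul _)]
  rw [sum_range_succ', Nat.cast_zero, zero_div, zero_mul, mul_zero, add_zero]
  have hterm (p : ℕ) : |((p + 1 : ℕ) : ℝ) / n * L (p + 1) (fun t => t - x) x| ≤ M1 x / n := by
    calc |((p + 1 : ℕ) : ℝ) / n * L (p + 1) (fun t => t - x) x|
        = ((p + 1 : ℕ) : ℝ) / n * |L (p + 1) (fun t => t - x) x| := by
          rw [abs_mul, abs_of_nonneg (by positivity)]
      _ ≤ ((p + 1 : ℕ) : ℝ) / n * (M1 x / (p + 1 : ℕ)) := by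
          gcongr; exact hbound _ p.succ_pos x hx
      _ = M1 x / n := by field_simp
  have hweight (p : ℕ) :
      0 ≤ (n.choose (p + 1) : ℝ) * lam x ^ (p + 1) * (1 - lam x) ^ (n - (p + 1)) := by
    have : 0 ≤ 1 - lam x := by linarith
    positivity
  calc _ ≤ (1 - (1 - lam x) ^ n) * (M1 x / n) := by
        rw [← sum_range_choose_succ_mul_pow_mul_one_sub_pow]
        exact abs_sum_mul_le_sum_mul _ (fun p _ => hweight p) (fun p _ => hterm p)
    _ = M1 x * (1 - (1 - lam x) ^ n) / n := by ring

theorem stmt_11 (J : Set ℝ) (L : ℕ → (ℝ → ℝ) → (ℝ → ℝ))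
    (hL0 : ∀ f : ℝ → ℝ, L 0 f = f)
    (hsmul : ∀ (p : ℕ) (c : ℝ) (f : ℝ → ℝ), L p (fun t => c * f t) = fun y => c * L p f y)
    (M1 : ℝ → ℝ) (hM1 : ∀ x ∈ J, 0 ≤ M1 x)
    (hbound : ∀ p : ℕ, 1 ≤ p → ∀ x ∈ J, |L p (fun t => t - x) x| ≤ M1 x / p)
    (lam : ℝ → ℝ) (hlam : ∀ x ∈ J, lam x ∈ Set.Icc (0:ℝ) 1)
    (n : ℕ) (hn : 1 ≤ n) (x : ℝ) (hx : x ∈ J) :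
    |∑ p ∈ Finset.range (n + 1),
        (n.choose p : ℝ) * lam x ^ p * (1 - lam x) ^ (n - p) *
          L p (fun t => ((p : ℝ) / n) * t + (1 - (p : ℝ) / n) * x - x) x|
      ≤ M1 x * (1 - (1 - lam x) ^ n) / n :=
  stmt_11_general J L hsmul M1 hbound lam hlam n x hx
end

section
/- Let α_n, λ_n : J → [0,1] with α_n(x) ≤ λ_n(x) for all x ∈ J. If f ∈ D and x ∈ J satisfy L_p(f_{p/n,x})(x) ≤ L_{p+1}(f_{(p+1)/n,x})(x) for every p = 0,…,n-1, then L_{n,α_n}(f)(x) ≤ L_{n,λ_n}(f)(x). -/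
/-!
Write `B n a s = ∑ p ≤ n, (n choose p) s^p (1-s)^(n-p) a p`. Pascal's rule gives the de Casteljau
recursion `B (n+1) a s = (1-s) B n a s + s B n (a ∘ succ) s`, a convex combination of two degree-`n`
averages. For increasing `a` we have `B n a ≤ B n (a ∘ succ)` termwise, so moving `s` to a larger `t`
raises both averages and shifts weight onto the larger one; induction on `n` gives monotonicity.
-/

open Finset

section

variable {R : Type*} [CommRing R]

def bernsteinSum (n : ℕ) (a : ℕ → R) (s : R) : R :=
  ∑ p ∈ range (n + 1), (n.choose p : R) * s ^ p * (1 - s) ^ (n - p) * a p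

theorem bernsteinSum_zero (a : ℕ → R) (s : R) : bernsteinSum 0 a s = a 0 := by
  simp [bernsteinSum]

theorem bernsteinSum_succ (n : ℕ) (a : ℕ → R) (s : R) :
    bernsteinSum (n + 1) a s
      = (1 - s) * bernsteinSum n a s + s * bernsteinSum n (fun p => a (p + 1)) s := by
  set X : ℕ → R := fun p => s ^ (p + 1) * (1 - s) ^ (n - p) * a (p + 1)
  have hlow : (1 - s) * bernsteinSum n a s
      = ∑ p ∈ range n, (n.choose (p + 1) : R) * X p + (1 - s) ^ (n + 1) * a 0 := by
    rw [bernsteinSum, mul_sum, sum_range_succ']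
    congr 1
    · refine sum_congr rfl fun p hp => ?_
      simp only [X]
      rw [show n - p = n - (p + 1) + 1 by have := mem_range.1 hp; omega]
      ring
    · simp only [Nat.choose_zero_right, Nat.cast_one, pow_zero, tsub_zero]
      ring
  have hhigh : s * bernsteinSum n (fun p => a (p + 1)) s
      = ∑ p ∈ range (n + 1), (n.choose p : R) * X p := by
    rw [bernsteinSum, mul_sum]
    exact sum_congr rfl fun p _ => by ring
  have hpascal : ∀ p ∈ range (n + 1), ((n + 1).choose (p + 1) : R) * s ^ (p + 1)
      * (1 - s) ^ (n + 1 - (p + 1)) * a (p + 1)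
        = (n.choose p : R) * X p + (n.choose (p + 1) : R) * X p := by
    intro p _
    rw [Nat.choose_succ_succ', Nat.add_sub_add_right]
    push_cast
    ring
  rw [hlow, hhigh, bernsteinSum, sum_range_succ', sum_congr rfl hpascal, sum_add_distrib,
    sum_range_succ (fun p => (n.choose (p + 1) : R) * X p), Nat.choose_succ_self]
  simp only [Nat.cast_zero, zero_mul, add_zero, Nat.choose_zero_right, Nat.cast_one, pow_zero,
    tsub_zero]
  ring

theorem bernsteinSum_le_shift [PartialOrder R] [IsOrderedRing R] {n : ℕ} {a : ℕ → R}
    (ha : ∀ p ≤ n, a p ≤ a (p + 1)) {s : R} (hs : s ∈ Set.Icc 0 1) :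
    bernsteinSum n a s ≤ bernsteinSum n (fun p => a (p + 1)) s := by
  have h1s : 0 ≤ 1 - s := sub_nonneg.2 hs.2
  have hs0 := hs.1
  exact sum_le_sum fun p hp => mul_le_mul_of_nonneg_left (ha p (Nat.lt_succ_iff.1 (mem_range.1 hp)))
    (by positivity)

theorem bernsteinSum_monotoneOn [PartialOrder R] [IsOrderedRing R] {n : ℕ}
    {a : ℕ → R} (ha : ∀ p < n, a p ≤ a (p + 1)) : MonotoneOn (bernsteinSum n a) (Set.Icc 0 1) := by
  induction n generalizing a with
  | zero => intro s _ t _ _; simp [bernsteinSum_zero]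
  | succ n ih =>
    intro s hs t ht hst
    have hlow := ih (a := a) (fun p hp => ha p (by omega)) hs ht hst
    have hhigh := ih (a := fun p => a (p + 1)) (fun p hp => ha (p + 1) (by omega)) hs ht hst
    have hshift := bernsteinSum_le_shift (a := a) (n := n) (fun p hp => ha p (by omega)) ht
    rw [bernsteinSum_succ, bernsteinSum_succ]
    calc (1 - s) * bernsteinSum n a s + s * bernsteinSum n (fun p => a (p + 1)) s
        ≤ (1 - s) * bernsteinSum n a t + s * bernsteinSum n (fun p => a (p + 1)) t :=
          add_le_add (mul_le_mul_of_nonneg_left hlow (sub_nonneg.2 hs.2))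
            (mul_le_mul_of_nonneg_left hhigh hs.1)
      _ = (1 - t) * bernsteinSum n a t + t * bernsteinSum n (fun p => a (p + 1)) t
          - (t - s) * (bernsteinSum n (fun p => a (p + 1)) t - bernsteinSum n a t) := by ring
      _ ≤ (1 - t) * bernsteinSum n a t + t * bernsteinSum n (fun p => a (p + 1)) t :=
          sub_le_self _ (mul_nonneg (sub_nonneg.2 hst) (sub_nonneg.2 hshift))

end

theorem stmt_16_general (J : Set ℝ) (L : ℕ → (ℝ → ℝ) → (ℝ → ℝ))
    (alpha lam : ℝ → ℝ)
    (halpha : ∀ x ∈ J, alpha x ∈ Set.Icc (0:ℝ) 1)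
    (hlam : ∀ x ∈ J, lam x ∈ Set.Icc (0:ℝ) 1)
    (hle : ∀ x ∈ J, alpha x ≤ lam x)
    (n : ℕ) (f : ℝ → ℝ) (x : ℝ) (hx : x ∈ J)
    (hmono : ∀ p < n,
      L p (fun t => f (((p : ℝ) / n) * t + (1 - (p : ℝ) / n) * x)) x
        ≤ L (p + 1) (fun t => f ((((p : ℝ) + 1) / n) * t + (1 - ((p : ℝ) + 1) / n) * x)) x) :
    ∑ p ∈ Finset.range (n + 1),
        (n.choose p : ℝ) * alpha x ^ p * (1 - alpha x) ^ (n - p) *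
          L p (fun t => f (((p : ℝ) / n) * t + (1 - (p : ℝ) / n) * x)) x
      ≤ ∑ p ∈ Finset.range (n + 1),
          (n.choose p : ℝ) * lam x ^ p * (1 - lam x) ^ (n - p) *
            L p (fun t => f (((p : ℝ) / n) * t + (1 - (p : ℝ) / n) * x)) x := by
  have hmono' : ∀ p < n, L p (fun t => f ((p / n : ℝ) * t + (1 - p / n) * x)) x
      ≤ L (p + 1) (fun t => f (((p + 1 : ℕ) / n : ℝ) * t + (1 - (p + 1 : ℕ) / n) * x)) x := by
    simpa only [Nat.cast_succ] using hmono
  exact bernsteinSum_monotoneOn hmono' (halpha x hx) (hlam x hx) (hle x hx)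

theorem stmt_16 (J : Set ℝ) (L : ℕ → (ℝ → ℝ) → (ℝ → ℝ))
    (hL0 : ∀ f : ℝ → ℝ, L 0 f = f)
    (alpha lam : ℝ → ℝ)
    (halpha : ∀ x ∈ J, alpha x ∈ Set.Icc (0:ℝ) 1)
    (hlam : ∀ x ∈ J, lam x ∈ Set.Icc (0:ℝ) 1)
    (hle : ∀ x ∈ J, alpha x ≤ lam x)
    (n : ℕ) (hn : 1 ≤ n) (f : ℝ → ℝ) (x : ℝ) (hx : x ∈ J)
    (hmono : ∀ p < n,
      L p (fun t => f (((p : ℝ) / n) * t + (1 - (p : ℝ) / n) * x)) x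
        ≤ L (p + 1) (fun t => f ((((p : ℝ) + 1) / n) * t + (1 - ((p : ℝ) + 1) / n) * x)) x) :
    ∑ p ∈ Finset.range (n + 1),
        (n.choose p : ℝ) * alpha x ^ p * (1 - alpha x) ^ (n - p) *
          L p (fun t => f (((p : ℝ) / n) * t + (1 - (p : ℝ) / n) * x)) x
      ≤ ∑ p ∈ Finset.range (n + 1),
          (n.choose p : ℝ) * lam x ^ p * (1 - lam x) ^ (n - p) *
            L p (fun t => f (((p : ℝ) / n) * t + (1 - (p : ℝ) / n) * x)) x :=
  stmt_16_general J L alpha lam halpha hlam hle n f x hx hmono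
end

section
/- Suppose each L_p : D → F(J) is positive linear with L_p(1) = 1 and L_p(f)(x) ≥ f(x) for all convex f ∈ D and x ∈ J, and the sets f_{p/n,x} ∈ D. Then for every convex f ∈ D, constant λ ∈ [0,1], n ≥ 1, and x ∈ J: L_{n,λ}(f)(x) ≥ f(x). -/
/-! The `p`-th term applies `L p` to `f_{p/n,x} : t ↦ f (p/n · t + (1 - p/n) · x)`,
which is again convex (a convex function composed with a homothety centred at `x ∈ I`) and
takes the value `f x` at `x`. Hence `L p f_{p/n,x} x ≥ f x` for every `p`, and the binomial weights
are nonnegative and sum to `(λ + (1 - λ)) ^ n = 1`. -/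

open Finset

theorem ConvexOn.comp_smul_add_one_sub_smul {𝕜 E β : Type*} [Field 𝕜] [LinearOrder 𝕜]
    [IsStrictOrderedRing 𝕜] [AddCommGroup E] [Module 𝕜 E] [AddCommMonoid β] [PartialOrder β]
    [SMul 𝕜 β] {s : Set E} {f : E → β} (hf : ConvexOn 𝕜 s f) {x : E} (hx : x ∈ s) {a : 𝕜}
    (ha₀ : 0 ≤ a) (ha₁ : a ≤ 1) :
    ConvexOn 𝕜 s (fun t => f (a • t + (1 - a) • x)) := by
  have hg : (fun t => f (a • t + (1 - a) • x)) = f ∘ AffineMap.homothety x a := by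
    ext t
    simp only [Function.comp_apply, AffineMap.homothety_apply, vsub_eq_sub, vadd_eq_add,
      smul_sub, sub_smul, one_smul]
    abel_nf
  rw [hg]
  refine (hf.comp_affineMap _).subset (fun t ht => ?_) hf.1
  simpa [AffineMap.homothety_apply, add_comm] using hf.1.add_smul_sub_mem hx ht ⟨ha₀, ha₁⟩

theorem sum_range_choose_mul_pow_mul_one_sub_pow {R : Type*} [CommRing R] (r : R) (n : ℕ) :
    ∑ p ∈ range (n + 1), (n.choose p : R) * r ^ p * (1 - r) ^ (n - p) = 1 := by
  simpa [mul_comm, mul_left_comm, mul_assoc] using (add_pow r (1 - r) n).symm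

theorem stmt_17_general (I J : Set ℝ) (hJI : J ⊆ I)
    (L : ℕ → (ℝ → ℝ) → (ℝ → ℝ))
    (hconvge : ∀ (p : ℕ) (g : ℝ → ℝ), ConvexOn ℝ I g → ∀ y ∈ J, g y ≤ L p g y)
    (f : ℝ → ℝ) (hf : ConvexOn ℝ I f)
    (lam : ℝ) (hlam : lam ∈ Set.Icc (0:ℝ) 1)
    (n : ℕ) (x : ℝ) (hx : x ∈ J) :
    f x ≤ ∑ p ∈ Finset.range (n + 1),
        (n.choose p : ℝ) * lam ^ p * (1 - lam) ^ (n - p) *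
          L p (fun t => f (((p : ℝ) / n) * t + (1 - (p : ℝ) / n) * x)) x := by
  have hsummand : ∀ p ∈ range (n + 1),
      f x ≤ L p (fun t => f (((p : ℝ) / n) * t + (1 - (p : ℝ) / n) * x)) x := by
    intro p hp
    have hpn : (p : ℝ) / n ≤ 1 :=
      div_le_one_of_le₀ (by exact_mod_cast Nat.lt_succ_iff.1 (mem_range.1 hp)) n.cast_nonneg
    have hconv := hf.comp_smul_add_one_sub_smul (hJI hx) (by positivity) hpn
    calc f x = f ((p : ℝ) / n * x + (1 - (p : ℝ) / n) * x) := by ring_nf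
      _ ≤ _ := hconvge p _ hconv x hx
  have hweight : ∀ p ∈ range (n + 1), 0 ≤ (n.choose p : ℝ) * lam ^ p * (1 - lam) ^ (n - p) :=
    fun p _ => by
      have := hlam.1
      have := sub_nonneg.2 hlam.2
      positivity
  calc f x = ∑ p ∈ range (n + 1), (n.choose p : ℝ) * lam ^ p * (1 - lam) ^ (n - p) * f x := by
        rw [← sum_mul, sum_range_choose_mul_pow_mul_one_sub_pow, one_mul]
    _ ≤ _ := sum_le_sum fun p hp => mul_le_mul_of_nonneg_left (hsummand p hp) (hweight p hp)

theorem stmt_17 (I J : Set ℝ) (hI : Convex ℝ I) (hJI : J ⊆ I)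
    (L : ℕ → (ℝ → ℝ) → (ℝ → ℝ))
    (hL0 : ∀ f : ℝ → ℝ, L 0 f = f)
    (hpos : ∀ (p : ℕ) (f : ℝ → ℝ), (∀ t ∈ I, 0 ≤ f t) → ∀ y ∈ J, 0 ≤ L p f y)
    (hone : ∀ p : ℕ, ∀ y ∈ J, L p (fun _ => (1:ℝ)) y = 1)
    (hconvge : ∀ (p : ℕ) (g : ℝ → ℝ), ConvexOn ℝ I g → ∀ y ∈ J, g y ≤ L p g y)
    (f : ℝ → ℝ) (hf : ConvexOn ℝ I f)
    (lam : ℝ) (hlam : lam ∈ Set.Icc (0:ℝ) 1)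
    (n : ℕ) (hn : 1 ≤ n) (x : ℝ) (hx : x ∈ J) :
    f x ≤ ∑ p ∈ Finset.range (n + 1),
        (n.choose p : ℝ) * lam ^ p * (1 - lam) ^ (n - p) *
          L p (fun t => f (((p : ℝ) / n) * t + (1 - (p : ℝ) / n) * x)) x :=
  stmt_17_general I J hJI L hconvge f hf lam hlam n x hx
end

section
/- Suppose each L_p : D → F(J) preserves monotone increasing functions and convex functions, D is stable under t ↦ f(αt + (1-α)x), and λ_n ∈ [0,1] is constant. Let f ∈ D be convex with each f_{p/n,x} mapped by L_p so that the function z ↦ L_p(f_{p/n,z})(z) is convex on a convex J. Then L_{n,λ_n}(f) is convex on J. In particular, under the hypotheses that L_p maps increasing functions to increasing functions and convex functions to convex functions for all p ≤ n, the map z ↦ L_p(f_{p/n,z})(z) is convex on J for convex f, and hence L_{n,λ_n}(f) is convex. -/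
/-!
Write `φ_z = T f_{α,z}`. For `x < y` and `m = a x + b y`, convexity of `f` gives
`f_{α,m} ≤ a f_{α,x} + b f_{α,y}` on `I`, so by positivity `φ_m(m) ≤ a φ_x(m) + b φ_y(m)`.
Each `φ_z` is convex, which bounds `φ_x(m)` and `φ_y(m)` by chords; the resulting cross terms
are exchanged by `φ_y(x) + φ_x(y) ≤ φ_x(x) + φ_y(y)`, which holds because `f_{α,y} - f_{α,x}`
is increasing (the increments of a convex function increase) and `T` preserves monotonicity.
So `z ↦ φ_z(z)` is convex, and `L_{n,λ}(f)` is a nonnegative combination of such functions.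
-/

open Finset

theorem ConvexOn.map_add_sub_map_le {𝕜 : Type*} [Field 𝕜] [LinearOrder 𝕜] [IsStrictOrderedRing 𝕜]
    {s : Set 𝕜} {f : 𝕜 → 𝕜} (hf : ConvexOn 𝕜 s f) {a b c : 𝕜} (ha : a ∈ s) (hbc : b + c ∈ s)
    (hab : a ≤ b) (hc : 0 ≤ c) : f (a + c) - f a ≤ f (b + c) - f b := by
  rcases hc.eq_or_lt with rfl | hc
  · simp
  -- both `a + c` and `b` lie on the segment `[a, b + c]`, with mirrored weights
  have hd : 0 < b + c - a := by linarith
  set θ := c / (b + c - a)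
  have hθ0 : 0 ≤ θ := by positivity
  have hθ1 : 0 ≤ 1 - θ := by rw [sub_nonneg, div_le_one hd]; linarith
  have hθd : θ * (b + c - a) = c := div_mul_cancel₀ c hd.ne'
  have hac := hf.2 ha hbc hθ1 hθ0 (by ring)
  have hb := hf.2 ha hbc hθ0 hθ1 (by ring)
  simp only [smul_eq_mul] at hac hb
  rw [show (1 - θ) * a + θ * (b + c) = a + c by linear_combination hθd] at hac
  rw [show θ * a + (1 - θ) * (b + c) = b by linear_combination -hθd] at hb
  linarith

theorem ConvexOn.finset_sum {𝕜 E β ι : Type*} [Semiring 𝕜] [PartialOrder 𝕜] [AddCommMonoid E]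
    [AddCommMonoid β] [PartialOrder β] [IsOrderedAddMonoid β] [SMul 𝕜 E] [Module 𝕜 β]
    {s : Set E} (hs : Convex 𝕜 s) (t : Finset ι) {f : ι → E → β}
    (hf : ∀ i ∈ t, ConvexOn 𝕜 s (f i)) : ConvexOn 𝕜 s fun x => ∑ i ∈ t, f i x := by
  classical
  induction t using Finset.induction_on with
  | empty => simpa using convexOn_const (0 : β) hs
  | insert i t hi ih =>
    simp only [sum_insert hi]
    exact (hf i (mem_insert_self i t)).add (ih fun j hj => hf j (mem_insert_of_mem hj))

/-- The paper's `f_{α,x}`. -/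
def compHomothety (f : ℝ → ℝ) (x α : ℝ) : ℝ → ℝ := fun t => f (α * t + (1 - α) * x)

section compHomothety

variable {I : Set ℝ} {f : ℝ → ℝ} {α : ℝ}

lemma Convex.homothety_mem (hI : Convex ℝ I) {t x : ℝ} (ht : t ∈ I) (hx : x ∈ I)
    (hα₀ : 0 ≤ α) (hα₁ : α ≤ 1) : α * t + (1 - α) * x ∈ I :=
  hI ht hx hα₀ (sub_nonneg.2 hα₁) (add_sub_cancel α 1)

lemma ConvexOn.comp_homothety (hf : ConvexOn ℝ I f) {x : ℝ} (hx : x ∈ I) (hα₀ : 0 ≤ α)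
    (hα₁ : α ≤ 1) : ConvexOn ℝ I (compHomothety f x α) := by
  refine ⟨hf.1, fun t ht u hu a b ha hb hab => ?_⟩
  have h := hf.2 (hf.1.homothety_mem ht hx hα₀ hα₁) (hf.1.homothety_mem hu hx hα₀ hα₁) ha hb hab
  simp only [compHomothety, smul_eq_mul] at h ⊢
  convert h using 2
  linear_combination (-(1 - α) * x) * hab

lemma ConvexOn.comp_homothety_center (hf : ConvexOn ℝ I f) {t : ℝ} (ht : t ∈ I) (hα₀ : 0 ≤ α)
    (hα₁ : α ≤ 1) : ConvexOn ℝ I fun x => compHomothety f x α t := by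
  refine ⟨hf.1, fun x hx y hy a b ha hb hab => ?_⟩
  have h := hf.2 (hf.1.homothety_mem ht hx hα₀ hα₁) (hf.1.homothety_mem ht hy hα₀ hα₁) ha hb hab
  simp only [compHomothety, smul_eq_mul] at h ⊢
  convert h using 2
  linear_combination (-α * t) * hab

lemma ConvexOn.monotoneOn_comp_homothety_sub (hf : ConvexOn ℝ I f) {x y : ℝ} (hx : x ∈ I)
    (hy : y ∈ I) (hxy : x ≤ y) (hα₀ : 0 ≤ α) (hα₁ : α ≤ 1) :
    MonotoneOn (compHomothety f y α - compHomothety f x α) I := by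
  intro t ht u hu htu
  have h := hf.map_add_sub_map_le (b := α * u + (1 - α) * x) (c := (1 - α) * (y - x))
    (hf.1.homothety_mem ht hx hα₀ hα₁)
    (by convert hf.1.homothety_mem hu hy hα₀ hα₁ using 1; ring)
    (by gcongr) (mul_nonneg (sub_nonneg.2 hα₁) (sub_nonneg.2 hxy))
  simp only [Pi.sub_apply, compHomothety]
  convert h using 3 <;> ring

end compHomothety

section PositiveOperator

variable {I J : Set ℝ} {T : (ℝ → ℝ) →ₗ[ℝ] (ℝ → ℝ)}

lemma LinearMap.apply_le_apply_of_nonneg_of_le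
    (hT : ∀ g : ℝ → ℝ, (∀ t ∈ I, 0 ≤ g t) → ∀ y ∈ J, 0 ≤ T g y) {g h : ℝ → ℝ}
    (hgh : ∀ t ∈ I, g t ≤ h t) {y : ℝ} (hy : y ∈ J) : T g y ≤ T h y := by
  have := hT (h - g) (fun t ht => sub_nonneg.2 (hgh t ht)) y hy
  rwa [map_sub, Pi.sub_apply, sub_nonneg] at this

theorem convexOn_apply_compHomothety_self
    (hT : ∀ g : ℝ → ℝ, (∀ t ∈ I, 0 ≤ g t) → ∀ y ∈ J, 0 ≤ T g y)
    (hmono : ∀ g : ℝ → ℝ, MonotoneOn g I → MonotoneOn (T g) J)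
    (hconv : ∀ g : ℝ → ℝ, ConvexOn ℝ I g → ConvexOn ℝ J (T g))
    (hJ : Convex ℝ J) (hJI : J ⊆ I) {f : ℝ → ℝ} (hf : ConvexOn ℝ I f) {α : ℝ} (hα₀ : 0 ≤ α)
    (hα₁ : α ≤ 1) : ConvexOn ℝ J fun z => T (compHomothety f z α) z := by
  refine LinearOrder.convexOn_of_lt hJ fun x hx y hy hxy a b ha hb hab => ?_
  have hφ := (hconv _ (hf.comp_homothety (hJI hx) hα₀ hα₁)).2 hx hy ha.le hb.le hab
  have hψ := (hconv _ (hf.comp_homothety (hJI hy) hα₀ hα₁)).2 hx hy ha.le hb.le hab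
  simp only [smul_eq_mul] at hφ hψ ⊢
  set m := a * x + b * y
  set φ := T (compHomothety f x α)
  set ψ := T (compHomothety f y α)
  have h_center : T (compHomothety f m α) m ≤ a * φ m + b * ψ m := by
    have := LinearMap.apply_le_apply_of_nonneg_of_le hT
      (h := a • compHomothety f x α + b • compHomothety f y α)
      (fun t ht => (hf.comp_homothety_center ht hα₀ hα₁).2 (hJI hx) (hJI hy) ha.le hb.le hab)
      (hJ hx hy ha.le hb.le hab)
    simpa only [map_add, map_smul, Pi.add_apply, Pi.smul_apply, smul_eq_mul] using this
  have h_exchange : ψ x - φ x ≤ ψ y - φ y := by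
    have := hmono _ (hf.monotoneOn_comp_homothety_sub (hJI hx) (hJI hy) hxy.le hα₀ hα₁)
      hx hy hxy.le
    rwa [map_sub] at this
  linear_combination h_center + a * hφ + b * hψ + a * b * h_exchange + (a * φ x + b * ψ y) * hab

end PositiveOperator

theorem stmt_18_general (I J : Set ℝ) (hJ : Convex ℝ J) (hJI : J ⊆ I)
    (L : ℕ → (ℝ → ℝ) → (ℝ → ℝ))
    (hadd : ∀ (p : ℕ) (f g : ℝ → ℝ), L p (f + g) = L p f + L p g)
    (hsmul : ∀ (p : ℕ) (c : ℝ) (f : ℝ → ℝ), L p (c • f) = c • L p f)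
    (hpos : ∀ (p : ℕ) (f : ℝ → ℝ), (∀ t ∈ I, 0 ≤ f t) → ∀ y ∈ J, 0 ≤ L p f y)
    (n : ℕ)
    (hmono : ∀ p ≤ n, ∀ g : ℝ → ℝ, MonotoneOn g I → MonotoneOn (L p g) J)
    (hconv : ∀ p ≤ n, ∀ g : ℝ → ℝ, ConvexOn ℝ I g → ConvexOn ℝ J (L p g))
    (lam : ℝ) (hlam : lam ∈ Set.Icc (0:ℝ) 1)
    (f : ℝ → ℝ) (hf : ConvexOn ℝ I f) :
    ConvexOn ℝ J (fun x => ∑ p ∈ Finset.range (n + 1),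
      (n.choose p : ℝ) * lam ^ p * (1 - lam) ^ (n - p) *
        L p (fun t => f (((p : ℝ) / n) * t + (1 - (p : ℝ) / n) * x)) x) := by
  refine ConvexOn.finset_sum hJ _ fun p hp => ?_
  have hpn : p ≤ n := Nat.lt_succ_iff.mp (mem_range.mp hp)
  have hweight : 0 ≤ (n.choose p : ℝ) * lam ^ p * (1 - lam) ^ (n - p) := by
    have := hlam.1; have := sub_nonneg.2 hlam.2; positivity
  have hα₁ : (p : ℝ) / n ≤ 1 := div_le_one_of_le₀ (by exact_mod_cast hpn) n.cast_nonneg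
  let T : (ℝ → ℝ) →ₗ[ℝ] (ℝ → ℝ) := ⟨⟨L p, hadd p⟩, hsmul p⟩
  exact (convexOn_apply_compHomothety_self (T := T) (hpos p) (hmono p hpn) (hconv p hpn) hJ hJI
    hf (by positivity) hα₁).smul hweight

theorem stmt_18 (I J : Set ℝ) (hI : Convex ℝ I) (hJ : Convex ℝ J) (hJI : J ⊆ I)
    (L : ℕ → (ℝ → ℝ) → (ℝ → ℝ))
    (hL0 : ∀ f : ℝ → ℝ, L 0 f = f)
    (hadd : ∀ (p : ℕ) (f g : ℝ → ℝ), L p (f + g) = L p f + L p g)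
    (hsmul : ∀ (p : ℕ) (c : ℝ) (f : ℝ → ℝ), L p (c • f) = c • L p f)
    (hpos : ∀ (p : ℕ) (f : ℝ → ℝ), (∀ t ∈ I, 0 ≤ f t) → ∀ y ∈ J, 0 ≤ L p f y)
    (n : ℕ) (hn : 1 ≤ n)
    (hmono : ∀ p ≤ n, ∀ g : ℝ → ℝ, MonotoneOn g I → MonotoneOn (L p g) J)
    (hconv : ∀ p ≤ n, ∀ g : ℝ → ℝ, ConvexOn ℝ I g → ConvexOn ℝ J (L p g))
    (lam : ℝ) (hlam : lam ∈ Set.Icc (0:ℝ) 1)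
    (f : ℝ → ℝ) (hf : ConvexOn ℝ I f) :
    ConvexOn ℝ J (fun x => ∑ p ∈ Finset.range (n + 1),
      (n.choose p : ℝ) * lam ^ p * (1 - lam) ^ (n - p) *
        L p (fun t => f (((p : ℝ) / n) * t + (1 - (p : ℝ) / n) * x)) x) :=
  stmt_18_general I J hJ hJI L hadd hsmul hpos n hmono hconv lam hlam f hf
end
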